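/- Let τ be the coordinatewise multiplication-by-t automorphism of F_p((t))^d, V a τ-invariant compact open subgroup, F a complement of τ(V) in V with F_p-basis b_1, ..., b_d. Then every z ∈ F_p((t))^d can be written uniquely as a convergent sum z = Σ_{j∈ℤ, 1≤k≤d} n_{j,k} τ^j(b_k) with n_{j,k} ∈ F_p such that n_{j,k} = 0 for all j below some j_0; moreover, for m ∈ ℤ, z ∈ τ^m(V) if and only if the coefficients can be chosen with n_{j,k} = 0 for all j < m. -/

import Mathlib

/-- Coordinatewise multiplication by `t^j` (`j ∈ ℤ`) on `F_p((t))^d`, i.e. `τ^j`. -/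
noncomputable def tauZ (p d : ℕ) (j : ℤ) (z : Fin d → LaurentSeries (ZMod p)) :
    Fin d → LaurentSeries (ZMod p) :=
  fun r => HahnSeries.single j (1 : ZMod p) * z r

/-!
Since `t^j → 0` in `F_p((t))`, the images `τ^m(V)` of the compact subgroup `V` are closed and
shrink into every neighbourhood of `0` as `m → ∞`, while every `z` lies in one of them because `V`
is open. Splitting `v = Σ c_k b_k + τ w` again and again (greedy digits) produces finite partial
sums whose remainders lie in `τ^N(V)`, hence converge. Conversely, if `z ∈ τ^(j+1)(V)` and all
coefficients below level `j` vanish, then the level-`j` layer `τ^j (Σ n_{j,k} b_k)` lies in the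
closed subgroup `τ^(j+1)(V)`, so the directness of `V = F ⊕ τ(V)` kills it; induction on `j` gives
the vanishing criterion, and uniqueness follows by applying it to the difference of two
expansions, which sums to `0 ∈ τ^m(V)` for every `m`.
-/

open Filter Topology Pointwise HahnSeries

section TopologicalAddGroup

variable {ι M : Type*} [AddCommGroup M] [TopologicalSpace M] [IsTopologicalAddGroup M]

theorem HasSum.sub_sum_mem {H : AddSubgroup M} (hH : IsClosed (H : Set M)) {f : ι → M} {z : M}
    (hf : HasSum f z) {s : Finset ι} (hs : ∀ i ∉ s, f i ∈ H) : z - ∑ i ∈ s, f i ∈ H := by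
  classical
  refine hH.mem_of_tendsto (hf.sub_const _) ?_
  filter_upwards [eventually_ge_atTop s] with S hS
  rw [← Finset.sum_sdiff_eq_sub hS]
  exact H.sum_mem fun i hi => hs i (Finset.mem_sdiff.1 hi).2

theorem hasSum_of_forall_sub_sum_mem {κ : Type*} {H : κ → AddSubgroup M}
    (hH : ∀ U ∈ 𝓝 (0 : M), ∃ N, (H N : Set M) ⊆ U) {f : ι → M} {z : M}
    (hf : ∀ N, ∃ s : Finset ι, (∀ i ∉ s, f i ∈ H N) ∧ z - ∑ i ∈ s, f i ∈ H N) :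
    HasSum f z := by
  classical
  rw [HasSum, SummationFilter.unconditional_filter, ← tendsto_sub_nhds_zero_iff]
  intro U hU
  rw [Filter.mem_map]
  obtain ⟨N, hN⟩ := hH U hU
  obtain ⟨s, hout, hs⟩ := hf N
  filter_upwards [eventually_ge_atTop s] with S hS
  show ∑ i ∈ S, f i - z ∈ U
  rw [← sub_sub_sub_cancel_right _ _ (∑ i ∈ s, f i), ← Finset.sum_sdiff_eq_sub hS]
  exact hN (sub_mem ((H N).sum_mem fun i hi => hout i (Finset.mem_sdiff.1 hi).2) hs)

end TopologicalAddGroup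

theorem IsCompact.eventually_forall_smul_mem {ι R M : Type*} [Zero R] [Zero M] [SMulWithZero R M]
    [TopologicalSpace R] [TopologicalSpace M] [ContinuousSMul R M] {l : Filter ι} {a : ι → R}
    (ha : Tendsto a l (𝓝 0)) {C : Set M} (hC : IsCompact C) {U : Set M} (hU : U ∈ 𝓝 0) :
    ∀ᶠ i in l, ∀ x ∈ C, a i • x ∈ U :=
  ha.eventually <| hC.eventually_forall_of_forall_eventually (P := fun r x => r • x ∈ U) fun x _ =>
    continuous_smul.continuousAt (x := ((0 : R), x)) (by simpa using hU)

theorem LaurentSeries.tendsto_single_one_atTop (𝔽 : Type*) [Field 𝔽] :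
    Tendsto (fun j : ℤ => (single j (1 : 𝔽) : LaurentSeries 𝔽)) atTop (𝓝 0) := by
  have hpow : Tendsto (fun N : ℕ => (single (N : ℤ) (1 : 𝔽) : LaurentSeries 𝔽)) atTop (𝓝 0) := by
    simpa [single_pow] using Valued.tendsto_zero_pow_of_le_exp_neg_one
      (le_of_eq (LaurentSeries.valuation_single_zpow (K := 𝔽) 1))
  intro U hU
  obtain ⟨N, hN⟩ := eventually_atTop.1 (hpow hU)
  refine mem_atTop_sets.2 ⟨N, fun j hj => ?_⟩
  simpa [Int.toNat_of_nonneg (by omega : (0 : ℤ) ≤ j)] using hN j.toNat (by omega)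

section TauExpansion

variable {p d : ℕ} [Fact p.Prime]

local notation "𝕂" => LaurentSeries (ZMod p)
local notation "𝕄" => Fin d → LaurentSeries (ZMod p)

theorem tauZ_eq_smul (j : ℤ) (z : 𝕄) : tauZ p d j z = (single j 1 : 𝕂) • z := rfl

theorem tauZ_add_index (i j : ℤ) (z : 𝕄) : tauZ p d (i + j) z = tauZ p d i (tauZ p d j z) := by
  simp only [tauZ_eq_smul, smul_smul, single_mul_single, mul_one]

theorem tauZ_zero_index (z : 𝕄) : tauZ p d 0 z = z := by
  simp only [tauZ_eq_smul, single_zero_one, one_smul]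

theorem tauZ_add (j : ℤ) (x y : 𝕄) : tauZ p d j (x + y) = tauZ p d j x + tauZ p d j y := by
  simp only [tauZ_eq_smul, smul_add]

theorem tauZ_injective (j : ℤ) : Function.Injective (tauZ p d j) := fun x y h => by
  simpa only [← tauZ_add_index, neg_add_cancel, tauZ_zero_index] using congrArg (tauZ p d (-j)) h

theorem tauZ_sum_smul (j : ℤ) (c : Fin d → ZMod p) (b : Fin d → 𝕄) :
    tauZ p d j (∑ k, c k • b k) = ∑ k, c k • tauZ p d j (b k) := by
  rw [tauZ_eq_smul, Finset.smul_sum]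
  exact Finset.sum_congr rfl fun k _ => (smul_comm _ _ _).symm

noncomputable def tauSubgroup (m : ℤ) (V : AddSubgroup 𝕄) : AddSubgroup 𝕄 := (single m 1 : 𝕂) • V

variable {V : AddSubgroup (Fin d → LaurentSeries (ZMod p))}
  {b : Fin d → Fin d → LaurentSeries (ZMod p)}

theorem mem_tauSubgroup_iff {m : ℤ} {z : 𝕄} :
    z ∈ tauSubgroup m V ↔ ∃ v ∈ V, z = tauZ p d m v := by
  rw [tauSubgroup.eq_def, AddSubgroup.mem_smul_pointwise_iff_exists]
  exact exists_congr fun v => and_congr_right fun _ => eq_comm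

theorem tauZ_mem_tauSubgroup {v : 𝕄} (hv : v ∈ V) (m : ℤ) :
    tauZ p d m v ∈ tauSubgroup m V :=
  AddSubgroup.smul_mem_pointwise_smul _ _ _ hv

theorem tauZ_natCast_mem (hτV : ∀ v ∈ V, tauZ p d 1 v ∈ V) {v : 𝕄} (hv : v ∈ V) (N : ℕ) :
    tauZ p d N v ∈ V := by
  induction N with
  | zero => simpa only [Nat.cast_zero, tauZ_zero_index] using hv
  | succ N ih =>
    rw [Nat.cast_succ, add_comm, tauZ_add_index]
    exact hτV _ ih

theorem antitone_tauSubgroup (hτV : ∀ v ∈ V, tauZ p d 1 v ∈ V) :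
    Antitone fun j : ℤ => tauSubgroup j V := by
  intro i j hij z hz
  obtain ⟨N, rfl⟩ := Int.le.dest hij
  obtain ⟨v, hv, rfl⟩ := mem_tauSubgroup_iff.1 hz
  exact mem_tauSubgroup_iff.2 ⟨_, tauZ_natCast_mem hτV hv N, tauZ_add_index _ _ _⟩

theorem isClosed_tauSubgroup (hVc : IsCompact (V : Set 𝕄)) (m : ℤ) :
    IsClosed (tauSubgroup m V : Set 𝕄) := by
  rw [tauSubgroup.eq_def, AddSubgroup.coe_pointwise_smul]
  exact (hVc.smul _).isClosed

theorem eventually_tauSubgroup_subset (hVc : IsCompact (V : Set 𝕄)) {U : Set 𝕄}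
    (hU : U ∈ 𝓝 0) : ∀ᶠ j in atTop, (tauSubgroup j V : Set 𝕄) ⊆ U := by
  filter_upwards [hVc.eventually_forall_smul_mem
    (LaurentSeries.tendsto_single_one_atTop (ZMod p)) hU] with j hj
  rw [tauSubgroup.eq_def, AddSubgroup.coe_pointwise_smul]
  rintro _ ⟨v, hv, rfl⟩
  exact hj v hv

theorem exists_mem_tauSubgroup (hV : (V : Set 𝕄) ∈ 𝓝 0) (z : 𝕄) :
    ∃ m : ℤ, z ∈ tauSubgroup m V := by
  obtain ⟨j, hj⟩ := (isCompact_singleton.eventually_forall_smul_mem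
    (LaurentSeries.tendsto_single_one_atTop (ZMod p)) hV).exists
  refine ⟨-j, mem_tauSubgroup_iff.2 ⟨_, hj z rfl, ?_⟩⟩
  rw [← tauZ_eq_smul, ← tauZ_add_index, neg_add_cancel, tauZ_zero_index]

variable (b) in
noncomputable def expansionTerm (n : ℤ × Fin d → ZMod p) (jk : ℤ × Fin d) : 𝕄 :=
  n jk • tauZ p d jk.1 (b jk.2)

theorem expansionTerm_mem_tauSubgroup (hτV : ∀ v ∈ V, tauZ p d 1 v ∈ V) (hbV : ∀ k, b k ∈ V)
    (n : ℤ × Fin d → ZMod p) {m : ℤ} {jk : ℤ × Fin d} (hjk : m ≤ jk.1) :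
    expansionTerm b n jk ∈ tauSubgroup m V :=
  ZMod.smul_mem (antitone_tauSubgroup hτV hjk (tauZ_mem_tauSubgroup (hbV jk.2) _)) _

theorem coeff_eq_zero_of_mem_tauSubgroup_add_one (hVc : IsCompact (V : Set 𝕄))
    (hτV : ∀ v ∈ V, tauZ p d 1 v ∈ V) (hbV : ∀ k, b k ∈ V)
    (hdir : ∀ (c : Fin d → ZMod p) (w : 𝕄), w ∈ V → (∑ k, c k • b k) = tauZ p d 1 w → c = 0)
    {n : ℤ × Fin d → ZMod p} {z : 𝕄} (hs : HasSum (expansionTerm b n) z) {j : ℤ}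
    (hn : ∀ jk : ℤ × Fin d, jk.1 < j → n jk = 0) (hz : z ∈ tauSubgroup (j + 1) V) (k : Fin d) :
    n (j, k) = 0 := by
  classical
  have htail : z - ∑ jk ∈ {j} ×ˢ Finset.univ, expansionTerm b n jk ∈ tauSubgroup (j + 1) V := by
    refine hs.sub_sum_mem (isClosed_tauSubgroup hVc _) fun jk hjk => ?_
    rcases lt_trichotomy jk.1 j with h | h | h
    · simp [expansionTerm, hn jk h]
    · exact absurd (Finset.mem_product.2 ⟨Finset.mem_singleton.2 h, Finset.mem_univ _⟩) hjk
    · exact expansionTerm_mem_tauSubgroup hτV hbV n h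
  have hlayer : ∑ jk ∈ {j} ×ˢ Finset.univ, expansionTerm b n jk
      = tauZ p d j (∑ k, n (j, k) • b k) := by
    simp [expansionTerm, tauZ_sum_smul]
  have hmem := sub_mem hz htail
  rw [sub_sub_cancel, hlayer] at hmem
  obtain ⟨w, hw, hjw⟩ := mem_tauSubgroup_iff.1 hmem
  have hcw : ∑ k, n (j, k) • b k = tauZ p d 1 w :=
    tauZ_injective j (by rw [hjw, ← tauZ_add_index, add_comm])
  exact congrFun (hdir _ w hw hcw) k

theorem coeff_eq_zero_of_mem_tauSubgroup (hVc : IsCompact (V : Set 𝕄))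
    (hτV : ∀ v ∈ V, tauZ p d 1 v ∈ V) (hbV : ∀ k, b k ∈ V)
    (hdir : ∀ (c : Fin d → ZMod p) (w : 𝕄), w ∈ V → (∑ k, c k • b k) = tauZ p d 1 w → c = 0)
    {n : ℤ × Fin d → ZMod p} {j₀ : ℤ} (hj₀ : ∀ jk : ℤ × Fin d, jk.1 < j₀ → n jk = 0) {z : 𝕄}
    (hs : HasSum (expansionTerm b n) z) {m : ℤ} (hz : z ∈ tauSubgroup m V) :
    ∀ jk : ℤ × Fin d, jk.1 < m → n jk = 0 := by
  suffices ∀ j, min j₀ m ≤ j → j ≤ m → ∀ jk : ℤ × Fin d, jk.1 < j → n jk = 0 from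
    this m (min_le_right _ _) le_rfl
  intro j hj
  induction j, hj using Int.leInduction with
  | base => exact fun _ jk hjk => hj₀ jk (by omega)
  | succ j _ ih =>
    intro hjm ⟨i, k⟩ hik
    rcases (by omega : i < j ∨ i = j) with hij | rfl
    · exact ih (by omega) _ hij
    · exact coeff_eq_zero_of_mem_tauSubgroup_add_one hVc hτV hbV hdir hs (ih (by omega))
        (antitone_tauSubgroup hτV hjm hz) k

theorem mem_tauSubgroup_of_coeff_eq_zero (hVc : IsCompact (V : Set 𝕄))
    (hτV : ∀ v ∈ V, tauZ p d 1 v ∈ V) (hbV : ∀ k, b k ∈ V) {n : ℤ × Fin d → ZMod p} {m : ℤ}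
    (hn : ∀ jk : ℤ × Fin d, jk.1 < m → n jk = 0) {z : 𝕄} (hs : HasSum (expansionTerm b n) z) :
    z ∈ tauSubgroup m V := by
  simpa using hs.sub_sum_mem (isClosed_tauSubgroup hVc m) (s := ∅) fun jk _ => by
    rcases lt_or_ge jk.1 m with h | h
    · simp [expansionTerm, hn jk h]
    · exact expansionTerm_mem_tauSubgroup hτV hbV n h

/-- The digits of `v₀` obtained by splitting `v = Σ c v k • b k + τ (next v)` repeatedly; the
`N`-th step is placed at level `m + N`. -/
noncomputable def greedyDigits (c : V → Fin d → ZMod p) (next : V → V) (m : ℤ) (v₀ : V)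
    (jk : ℤ × Fin d) : ZMod p :=
  if m ≤ jk.1 then c (next^[(jk.1 - m).toNat] v₀) jk.2 else 0

theorem tauZ_sub_sum_greedyDigits {c : V → Fin d → ZMod p} {next : V → V}
    (hnext : ∀ v : V, (v : 𝕄) = ∑ k, c v k • b k + tauZ p d 1 (next v)) (m : ℤ) (v₀ : V)
    (N : ℕ) : tauZ p d m v₀ - ∑ jk ∈ Finset.Ico m (m + N) ×ˢ Finset.univ,
      expansionTerm b (greedyDigits c next m v₀) jk = tauZ p d (m + N) (next^[N] v₀) := by
  induction N with
  | zero => simp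
  | succ N ih =>
    have hlayer : ∑ k, expansionTerm b (greedyDigits c next m v₀) (m + N, k)
        = tauZ p d (m + N) (∑ k, c (next^[N] v₀) k • b k) := by
      simp [expansionTerm, greedyDigits, tauZ_sum_smul]
    have hstep : tauZ p d (m + N) (next^[N] v₀) = tauZ p d (m + N) (∑ k, c (next^[N] v₀) k • b k)
        + tauZ p d (m + N + 1) (next^[N + 1] v₀) := by
      rw [hnext (next^[N] v₀), tauZ_add, ← tauZ_add_index, Function.iterate_succ_apply']
    rw [Finset.sum_product] at ih ⊢
    rw [Nat.cast_succ, ← add_assoc, ← Finset.insert_Ico_right_eq_Ico_add_one (by omega),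
      Finset.sum_insert (by simp), hlayer, add_comm, ← sub_sub, ih, hstep, add_assoc,
      add_sub_cancel_left]

theorem exists_hasSum_expansionTerm (hVc : IsCompact (V : Set 𝕄))
    (hτV : ∀ v ∈ V, tauZ p d 1 v ∈ V) (hbV : ∀ k, b k ∈ V)
    (hgen : ∀ v ∈ V, ∃ c : Fin d → ZMod p, ∃ w ∈ V, v = (∑ k, c k • b k) + tauZ p d 1 w)
    {m : ℤ} {z : 𝕄} (hz : z ∈ tauSubgroup m V) :
    ∃ n : ℤ × Fin d → ZMod p,
      (∀ jk : ℤ × Fin d, jk.1 < m → n jk = 0) ∧ HasSum (expansionTerm b n) z := by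
  obtain ⟨v₀, hv₀, rfl⟩ := mem_tauSubgroup_iff.1 hz
  have hstep (v : V) : ∃ (c : Fin d → ZMod p) (w : V), (v : 𝕄) = ∑ k, c k • b k + tauZ p d 1 w := by
    obtain ⟨c, w, hw, hvw⟩ := hgen v v.2
    exact ⟨c, ⟨w, hw⟩, hvw⟩
  choose c next hnext using hstep
  refine ⟨greedyDigits c next m ⟨v₀, hv₀⟩, fun jk hjk => if_neg (by omega),
    hasSum_of_forall_sub_sum_mem (H := fun N : ℕ => tauSubgroup (m + N) V) ?_ fun N => ?_⟩
  · intro U hU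
    obtain ⟨j, hj⟩ := eventually_atTop.1 (eventually_tauSubgroup_subset hVc hU)
    exact ⟨(j - m).toNat, hj _ (by omega)⟩
  · refine ⟨Finset.Ico m (m + N) ×ˢ Finset.univ, fun jk hjk => ?_, ?_⟩
    · simp only [Finset.mem_product, Finset.mem_Ico, Finset.mem_univ, and_true, not_and,
        not_lt] at hjk
      by_cases h : m ≤ jk.1
      · exact expansionTerm_mem_tauSubgroup hτV hbV _ (hjk h)
      · simp [expansionTerm, greedyDigits, h]
    · have hrem := tauZ_sub_sum_greedyDigits hnext m ⟨v₀, hv₀⟩ N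
      dsimp only at hrem
      rw [hrem]
      exact tauZ_mem_tauSubgroup (next^[N] _).2 _

theorem eq_of_hasSum_expansionTerm (hVc : IsCompact (V : Set 𝕄))
    (hτV : ∀ v ∈ V, tauZ p d 1 v ∈ V) (hbV : ∀ k, b k ∈ V)
    (hdir : ∀ (c : Fin d → ZMod p) (w : 𝕄), w ∈ V → (∑ k, c k • b k) = tauZ p d 1 w → c = 0)
    {n n' : ℤ × Fin d → ZMod p} (hn : ∃ j₀ : ℤ, ∀ jk : ℤ × Fin d, jk.1 < j₀ → n jk = 0)
    (hn' : ∃ j₀ : ℤ, ∀ jk : ℤ × Fin d, jk.1 < j₀ → n' jk = 0) {z : 𝕄}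
    (hs : HasSum (expansionTerm b n) z) (hs' : HasSum (expansionTerm b n') z) : n = n' := by
  obtain ⟨j₀, hj₀⟩ := hn
  obtain ⟨j₀', hj₀'⟩ := hn'
  have hdiff : HasSum (expansionTerm b (n - n')) 0 := by
    have hsub : expansionTerm b (n - n') = expansionTerm b n - expansionTerm b n' :=
      funext fun jk => sub_smul _ _ _
    rw [hsub, ← sub_self z]
    exact hs.sub hs'
  funext jk
  refine sub_eq_zero.1 (coeff_eq_zero_of_mem_tauSubgroup hVc hτV hbV hdir (j₀ := min j₀ j₀')
    (fun ik hik => ?_) hdiff (zero_mem _) jk (lt_add_one jk.1))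
  simp [hj₀ ik (by omega), hj₀' ik (by omega)]

end TauExpansion

theorem tau_expansion_general (p : ℕ) [Fact p.Prime] (d : ℕ)
    (V : AddSubgroup (Fin d → LaurentSeries (ZMod p)))
    (hVc : IsCompact (V : Set (Fin d → LaurentSeries (ZMod p))))
    (hVo : IsOpen (V : Set (Fin d → LaurentSeries (ZMod p))))
    (hτV : ∀ v ∈ V, tauZ p d 1 v ∈ V)
    (b : Fin d → (Fin d → LaurentSeries (ZMod p)))
    (hbV : ∀ k, b k ∈ V)
    (hgen : ∀ v ∈ V, ∃ c : Fin d → ZMod p, ∃ w ∈ V,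
      v = (∑ k, c k • b k) + tauZ p d 1 w)
    (hdir : ∀ (c : Fin d → ZMod p) (w : Fin d → LaurentSeries (ZMod p)), w ∈ V →
      (∑ k, c k • b k) = tauZ p d 1 w → c = 0)
    (z : Fin d → LaurentSeries (ZMod p)) :
    (∃! n : ℤ × Fin d → ZMod p,
      (∃ j0 : ℤ, ∀ jk : ℤ × Fin d, jk.1 < j0 → n jk = 0) ∧
      HasSum (fun jk : ℤ × Fin d => n jk • tauZ p d jk.1 (b jk.2)) z) ∧
    (∀ n : ℤ × Fin d → ZMod p,
      (∃ j0 : ℤ, ∀ jk : ℤ × Fin d, jk.1 < j0 → n jk = 0) →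
      HasSum (fun jk : ℤ × Fin d => n jk • tauZ p d jk.1 (b jk.2)) z →
      ∀ m : ℤ, ((∃ v ∈ V, z = tauZ p d m v) ↔
        ∀ jk : ℤ × Fin d, jk.1 < m → n jk = 0)) := by
  obtain ⟨m, hm⟩ := exists_mem_tauSubgroup (hVo.mem_nhds V.zero_mem) z
  obtain ⟨n, hn, hs⟩ := exists_hasSum_expansionTerm hVc hτV hbV hgen hm
  refine ⟨⟨n, ⟨⟨m, hn⟩, hs⟩, fun n' ⟨hn', hs'⟩ =>
    eq_of_hasSum_expansionTerm hVc hτV hbV hdir hn' ⟨m, hn⟩ hs' hs⟩, ?_⟩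
  rintro n' ⟨j₀, hj₀⟩ hs' m'
  rw [← mem_tauSubgroup_iff]
  exact ⟨coeff_eq_zero_of_mem_tauSubgroup hVc hτV hbV hdir hj₀ hs',
    fun hn' => mem_tauSubgroup_of_coeff_eq_zero hVc hτV hbV hn' hs'⟩

/-- With `V` a `τ`-invariant compact open subgroup of `F_p((t))^d` and `b_1, …, b_d` a
basis of a complement `F` of `τ(V)` in `V`, every `z ∈ F_p((t))^d` has a unique convergent
expansion `z = Σ_{j,k} n_{j,k} τ^j(b_k)` with coefficients vanishing for `j` below some
bound; moreover `z ∈ τ^m(V)` if and only if the coefficients vanish for all `j < m`. -/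
theorem tau_expansion (p : ℕ) [Fact p.Prime] (d : ℕ) (hd : 0 < d)
    (V : AddSubgroup (Fin d → LaurentSeries (ZMod p)))
    (hVc : IsCompact (V : Set (Fin d → LaurentSeries (ZMod p))))
    (hVo : IsOpen (V : Set (Fin d → LaurentSeries (ZMod p))))
    (hτV : ∀ v ∈ V, tauZ p d 1 v ∈ V)
    (b : Fin d → (Fin d → LaurentSeries (ZMod p)))
    (hbV : ∀ k, b k ∈ V)
    (hgen : ∀ v ∈ V, ∃ c : Fin d → ZMod p, ∃ w ∈ V,
      v = (∑ k, c k • b k) + tauZ p d 1 w)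
    (hdir : ∀ (c : Fin d → ZMod p) (w : Fin d → LaurentSeries (ZMod p)), w ∈ V →
      (∑ k, c k • b k) = tauZ p d 1 w → c = 0)
    (z : Fin d → LaurentSeries (ZMod p)) :
    (∃! n : ℤ × Fin d → ZMod p,
      (∃ j0 : ℤ, ∀ jk : ℤ × Fin d, jk.1 < j0 → n jk = 0) ∧
      HasSum (fun jk : ℤ × Fin d => n jk • tauZ p d jk.1 (b jk.2)) z) ∧
    (∀ n : ℤ × Fin d → ZMod p,
      (∃ j0 : ℤ, ∀ jk : ℤ × Fin d, jk.1 < j0 → n jk = 0) →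
      HasSum (fun jk : ℤ × Fin d => n jk • tauZ p d jk.1 (b jk.2)) z →
      ∀ m : ℤ, ((∃ v ∈ V, z = tauZ p d m v) ↔
        ∀ jk : ℤ × Fin d, jk.1 < m → n jk = 0)) :=
  tau_expansion_general p d V hVc hVo hτV b hbV hgen hdir z
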